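/- arXiv:1009.3248 — 2 statements merged into one kernel-verified Lean document; each statement's English description precedes it below -/
import Mathlib

section
/- Finite time Green–Kubo formula and Onsager reciprocity relations: fix t > 0 and suppose that for each X in an open neighborhood of 0 in ℝ^N one is given a system (M, (φ_X^t), ω_X) as in the continuous-time setup together with a bounded measurable flux observable Φ_X = (Φ_X^{(1)},…,Φ_X^{(N)}) : M → ℝ^N whose entropy cocycle satisfies c_X^t = ∫_0^t (X·Φ_X) ∘ φ_X^s ds ω_X-a.e. for all t. Assume (T1): ω_0 is invariant under φ_0^t for all t; (T2): each system has a time reversal θ_X with Φ_X ∘ θ_X = −Φ_X ω_X-a.e.; and that g_t(X,Y) := log ∫_M exp(−Y·∫_0^t Φ_X(φ_X^s(x)) ds) dω_X(x) is C^{1,2} in a neighborhood of (X,Y) = (0,0). Then X ↦ ⟨Φ_X^{(j)}⟩_t := (1/t)∫_0^t (∫_M Φ_X^{(j)} ∘ φ_X^s dω_X) ds is differentiable at X = 0 for each j, and the finite time kinetic transport coefficients L_{jkt} := ∂_{X_k}⟨Φ_X^{(j)}⟩_t|_{X=0} satisfy: (1) L_{jkt} = (1/2)∫_{−t}^{t}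 ω(Φ^{(k)}·(Φ^{(j)} ∘ φ^s))(1 − |s|/t) ds, where ω = ω_0, φ = φ_0, Φ = Φ_0; (2) L_{jkt} = L_{kjt}. -/
open MeasureTheory ENNReal intervalIntegral

/-- The time-averaged expectation value of the flux:
`⟨Φ^{(j)}⟩_t := (1/t)∫_0^t ω(Φ^{(j)}∘φ^s) ds`. -/
noncomputable def fluxAvg {M : Type*} [MeasurableSpace M] {N : ℕ}
    (ω : Measure M) (T : ℝ → M → M) (Φ : M → Fin N → ℝ) (t : ℝ) (j : Fin N) : ℝ :=
  (1 / t) * ∫ s in (0:ℝ)..t, ∫ x, Φ (T s x) j ∂ω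

/-- The generalized Evans–Searles functional
`g_t(X,Y) := log ∫ exp(-Y·∫_0^t Φ_X∘φ_X^s ds) dω_X` (here for fixed data of one `X`). -/
noncomputable def gES {M : Type*} [MeasurableSpace M] {N : ℕ}
    (ω : Measure M) (T : ℝ → M → M) (Φ : M → Fin N → ℝ) (t : ℝ) (Y : Fin N → ℝ) : ℝ :=
  Real.log (∫ x, Real.exp (-(∑ i, Y i * ∫ s in (0:ℝ)..t, Φ (T s x) i)) ∂ω)

/-!
Write `S_X := ∫₀ᵗ Φ_X ∘ φ_X^s ds`, so that `g_t(X, Y) = log ω_X(exp(-Y·S_X))`. Time reversal maps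
`S_X` to `-S_X ∘ φ_X^{-t}`, and the cocycle identity says that `ω_X ∘ φ_X^{t}` has density
`exp(-X·S_X)` with respect to `ω_X`; together they give the Evans–Searles symmetry
`g_t(X, Y) = g_t(X, X - Y)`. Hence `∂_{Y_j} g_t(X, Y) = -∂_{Y_j} g_t(X, X - Y)`, and along the
diagonal `X = Y = u e_k` this becomes `∂_{Y_j} g_t(u e_k, u e_k) = -∂_{Y_j} g_t(u e_k, 0)`.
Differentiating at `u = 0`, which needs the continuity of the mixed partial, gives
`∂_{X_k}∂_{Y_j} g_t(0, 0) = -½ ∂_{Y_k}∂_{Y_j} g_t(0, 0)`. Since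
`∂_{Y_j} g_t(X, 0) = -t ⟨Φ_X^{(j)}⟩_t`, this says `L_{jkt} = (2t)⁻¹ ω(S_j S_k)` (the means of
`S` vanish at equilibrium), which is symmetric in `j, k`. Invariance of `ω` turns `ω(S_j S_k)` into
the integral of the correlation function against the tent `t - |s|`.
-/

open Filter Topology Real Function Set

section Calculus

theorem hasDerivAt_diag_of_continuousAt_partial {H Ha : ℝ → ℝ → ℝ} {c x : ℝ}
    (hHa : ∀ᶠ p in 𝓝 (x, x), HasDerivAt (fun a => H a p.2) (Ha p.1 p.2) p.1)
    (hHac : ContinuousAt (fun p : ℝ × ℝ => Ha p.1 p.2) (x, x))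
    (hHb : HasDerivAt (H x) c x) :
    HasDerivAt (fun u => H u u) (Ha x x + c) x := by
  suffices h : HasDerivAt (fun u => H u u - H x u) (Ha x x) x by
    simpa using h.fun_add hHb
  rw [hasDerivAt_iff_isLittleO, Asymptotics.isLittleO_iff]
  intro ε hε
  obtain ⟨δ, hδ, hball⟩ := Metric.eventually_nhds_iff_ball.1
    (hHa.and (hHac.eventually (Metric.closedBall_mem_nhds _ hε)))
  filter_upwards [Metric.ball_mem_nhds x hδ] with u hu
  have hmem : ∀ a ∈ Metric.ball x δ, (a, u) ∈ Metric.ball (x, x) δ := fun a ha => by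
    rw [← ball_prod_same]; exact ⟨ha, hu⟩
  have hmvt := (convex_ball x δ).norm_image_sub_le_of_norm_hasDerivWithin_le
    (f := fun a => H a u - Ha x x * a) (f' := fun a => Ha a u - Ha x x)
    (fun a ha => (((hball _ (hmem a ha)).1).sub ((hasDerivAt_id a).const_mul _)
      |>.congr_deriv (by ring)).hasDerivWithinAt)
    (fun a ha => by simpa [dist_eq_norm] using (hball _ (hmem a ha)).2)
    (Metric.mem_ball_self hδ) hu
  convert hmvt using 2
  simp only [sub_self, smul_eq_mul]
  ring

variable {ι : Type*} [DecidableEq ι]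

theorem hasDerivAt_update_eq_neg_of_symm {g : (ι → ℝ) → ℝ} {X Y : ι → ℝ} {j : ι} {a b : ℝ}
    (hg : ∀ Y, g Y = g (X - Y)) (ha : HasDerivAt (fun u => g (update Y j u)) a (Y j))
    (hb : HasDerivAt (fun u => g (update (X - Y) j u)) b ((X - Y) j)) : a = -b := by
  have hreflect : (fun u => g (update Y j u)) = fun u => g (update (X - Y) j (X j - u)) := by
    ext u
    rw [hg]
    congr 1
    ext i
    rcases eq_or_ne i j with rfl | h <;> simp [*]
  rw [hreflect] at ha
  exact ha.unique (hb.comp_const_sub (X j) (Y j))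

theorem mixedPartial_eq_neg_half_of_symm {g Gy Gxy : (ι → ℝ) → (ι → ℝ) → ℝ}
    {U : Set ((ι → ℝ) × (ι → ℝ))} (hU : IsOpen U) (hU0 : (0, 0) ∈ U) {j k : ι} {c : ℝ}
    (hg : ∀ X Y, g X Y = g X (X - Y))
    (hGy : ∀ p ∈ U, HasDerivAt (fun u => g p.1 (update p.2 j u)) (Gy p.1 p.2) (p.2 j))
    (hGxy : ∀ p ∈ U, HasDerivAt (fun u => Gy (update p.1 k u) p.2) (Gxy p.1 p.2) (p.1 k))
    (hGxyc : ContinuousOn (fun p => Gxy p.1 p.2) U)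
    (hGyy : HasDerivAt (fun b => Gy 0 (update 0 k b)) c 0) :
    Gxy 0 0 = -c / 2 := by
  set e : ℝ → ι → ℝ := fun u => update 0 k u
  have he : Continuous e := continuous_const.update k continuous_id
  have he0 : e 0 = 0 := by simp [e]
  have hU0' : (e 0, e 0) ∈ U := by rwa [he0]
  have hEU : ∀ᶠ q : ℝ × ℝ in 𝓝 (0, 0), (e q.1, e q.2) ∈ U :=
    (he.prodMap he).continuousAt.preimage_mem_nhds (hU.mem_nhds hU0')
  have hdiag := hasDerivAt_diag_of_continuousAt_partial
    (H := fun a b => Gy (e a) (e b)) (Ha := fun a b => Gxy (e a) (e b)) (x := 0)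
    (hEU.mono fun q hq => by simpa [e] using hGxy _ hq)
    (ContinuousAt.comp (f := Prod.map e e) (x := (0, 0))
      (hGxyc.continuousAt (hU.mem_nhds hU0')) (he.prodMap he).continuousAt)
    (by simpa [he0] using hGyy)
  have hanti : (fun u => Gy (e u) (e u)) =ᶠ[𝓝 0] fun u => -Gy (e u) 0 := by
    filter_upwards [(he.prodMk he).continuousAt.preimage_mem_nhds (hU.mem_nhds hU0'),
      (he.prodMk continuous_const).continuousAt.preimage_mem_nhds
        (hU.mem_nhds (by rwa [he0] at hU0' ⊢))] with u hdiag hzero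
    simpa using hasDerivAt_update_eq_neg_of_symm (hg (e u)) (hGy _ hdiag)
      (by simpa using hGy _ hzero)
  have hX : HasDerivAt (fun u => -Gy (e u) 0) (-Gxy 0 0) 0 := by
    simpa [e] using (hGxy (0, 0) hU0).fun_neg
  have := hdiag.unique (hX.congr_of_eventuallyEq hanti)
  simp only [he0] at this
  linarith

end Calculus

section RealIntegral

theorem integral_integral_eq_integral_mul_sub {f : ℝ → ℝ} {a b : ℝ}
    (hf : IntervalIntegrable f volume a b) :
    ∫ v in a..b, ∫ r in a..v, f r = ∫ r in a..b, f r * (b - r) := by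
  have hF := hf.absolutelyContinuousOnInterval_intervalIntegral (c := a) (by simp)
  have hg : AbsolutelyContinuousOnInterval (fun v => v - b) a b :=
    (contDiff_id.sub contDiff_const).contDiffOn.absolutelyContinuousOnInterval
  have hderiv : ∀ᵐ v, v ∈ uIoc a b → deriv (fun x => ∫ r in a..x, f r) v = f v := by
    filter_upwards [hf.ae_hasDerivAt_integral] with v hv hvab
    exact (hv (uIoc_subset_uIcc hvab) a left_mem_uIcc).deriv
  have hparts := hF.integral_mul_deriv_eq_deriv_mul hg
  simp only [deriv_sub_const, deriv_id'', mul_one, sub_self, mul_zero,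
    intervalIntegral.integral_same, zero_mul, zero_sub] at hparts
  rw [hparts, intervalIntegral.integral_congr_ae (hderiv.mono fun v hv hvab => by rw [hv hvab]),
    ← intervalIntegral.integral_neg]
  congr 1; ext r; ring

theorem integral_integral_shift_eq_integral_mul_tent {f : ℝ → ℝ}
    (hf : ∀ a b, IntervalIntegrable f volume a b) {t : ℝ} (ht : 0 ≤ t) :
    ∫ u in 0..t, ∫ r in -u..t - u, f r = ∫ s in -t..t, f s * (t - |s|) := by
  set F : ℝ → ℝ := fun v => ∫ r in 0..v, f r
  have hFc : Continuous F := intervalIntegral.continuous_primitive hf 0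
  have hinner : ∀ u, ∫ r in -u..t - u, f r = F (t - u) - F (-u) := fun u =>
    (intervalIntegral.integral_interval_sub_left (hf 0 _) (hf 0 _)).symm
  have hpos : ∫ s in 0..t, f s * (t - s) = ∫ s in 0..t, f s * (t - |s|) :=
    intervalIntegral.integral_congr fun s hs => by
      rw [uIcc_of_le ht] at hs; rw [abs_of_nonneg hs.1]
  have hneg : ∫ s in -t..0, f s * (t + s) = ∫ s in -t..0, f s * (t - |s|) :=
    intervalIntegral.integral_congr fun s hs => by
      rw [uIcc_of_le (by linarith)] at hs; rw [abs_of_nonpos hs.2]; ring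
  calc ∫ u in 0..t, ∫ r in -u..t - u, f r
      = (∫ u in 0..t, F (t - u)) - ∫ u in 0..t, F (-u) := by
        simp_rw [hinner]
        exact intervalIntegral.integral_sub
          ((hFc.comp (continuous_sub_left t)).intervalIntegrable _ _)
          ((hFc.comp continuous_neg).intervalIntegrable _ _)
    _ = (∫ v in 0..t, F v) + ∫ v in 0..-t, F v := by
        rw [intervalIntegral.integral_comp_sub_left, intervalIntegral.integral_comp_neg,
          intervalIntegral.integral_symm (-t)]
        simp only [sub_self, sub_zero, neg_zero]
        ring
    _ = (∫ s in -t..0, f s * (t + s)) + ∫ s in 0..t, f s * (t - s) := by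
        rw [integral_integral_eq_integral_mul_sub (hf _ _),
          integral_integral_eq_integral_mul_sub (hf _ _), intervalIntegral.integral_symm (-t),
          ← intervalIntegral.integral_neg, add_comm]
        congr 2; ext s; ring
    _ = ∫ s in -t..t, f s * (t - |s|) := by
        rw [hneg, hpos]
        exact intervalIntegral.integral_add_adjacent_intervals
          ((hf _ _).mul_continuousOn (by fun_prop)) ((hf _ _).mul_continuousOn (by fun_prop))

lemma intervalIntegrable_of_norm_le {f : ℝ → ℝ} (hf : AEStronglyMeasurable f) {C : ℝ}
    (hC : ∀ s, ‖f s‖ ≤ C) (a b : ℝ) : IntervalIntegrable f volume a b :=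
  (intervalIntegrable_const (c := C)).mono_fun hf.restrict
    (ae_of_all _ fun s => (hC s).trans (le_norm_self C))

end RealIntegral

section DotProduct

variable {M ι : Type*} [Fintype ι]

lemma update_dotProduct [DecidableEq ι] (Y v : ι → ℝ) (j : ι) (u : ℝ) :
    update Y j u ⬝ᵥ v = Y ⬝ᵥ v + (u - Y j) * v j := by
  have : update Y j u = Y + Pi.single j (u - Y j) := by
    ext i; rcases eq_or_ne i j with rfl | h <;> simp [*]
  rw [this, add_dotProduct, single_dotProduct]

lemma norm_dotProduct_le (Y v : ι → ℝ) : ‖Y ⬝ᵥ v‖ ≤ (∑ i, ‖Y i‖) * ‖v‖ := by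
  rw [Finset.sum_mul]
  refine (norm_sum_le _ _).trans (Finset.sum_le_sum fun i _ => ?_)
  rw [norm_mul]
  exact mul_le_mul_of_nonneg_left (norm_le_pi_norm v i) (norm_nonneg _)

lemma norm_apply_le_of_norm_le {S : M → ι → ℝ} {C : ℝ} (hSb : ∀ x, ‖S x‖ ≤ C) (x : M) (j : ι) :
    ‖S x j‖ ≤ C :=
  (norm_le_pi_norm (S x) j).trans (hSb x)

lemma norm_exp_neg_dotProduct_le {S : M → ι → ℝ} {C : ℝ} (hSb : ∀ x, ‖S x‖ ≤ C) (Y : ι → ℝ)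
    (x : M) : ‖exp (-(Y ⬝ᵥ S x))‖ ≤ exp ((∑ i, ‖Y i‖) * C) := by
  rw [norm_of_nonneg (exp_pos _).le, exp_le_exp]
  exact (neg_le_abs _).trans ((norm_dotProduct_le _ _).trans
    (mul_le_mul_of_nonneg_left (hSb x) (Finset.sum_nonneg fun i _ => norm_nonneg _)))

end DotProduct

section Laplace

variable {M : Type*} [MeasurableSpace M] {ω : Measure M}

lemma norm_mul_exp_neg_mul_le {w ψ u R Cw Cψ : ℝ} (hw : ‖w‖ ≤ Cw) (hψ : ‖ψ‖ ≤ Cψ)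
    (hu : ‖u‖ ≤ R) : ‖w * exp (-(u * ψ))‖ ≤ Cw * exp (R * Cψ) := by
  rw [norm_mul, norm_of_nonneg (exp_pos _).le]
  refine mul_le_mul hw (exp_le_exp.2 ?_) (exp_pos _).le ((norm_nonneg _).trans hw)
  exact (neg_le_abs _).trans (norm_mul_le_of_le hu hψ)

theorem hasDerivAt_integral_mul_exp_neg_mul [IsFiniteMeasure ω] {w ψ : M → ℝ}
    (hw : AEStronglyMeasurable w ω) (hψ : AEStronglyMeasurable ψ ω) {Cw Cψ : ℝ}
    (hwb : ∀ x, ‖w x‖ ≤ Cw) (hψb : ∀ x, ‖ψ x‖ ≤ Cψ) (u₀ : ℝ) :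
    HasDerivAt (fun u => ∫ x, w x * exp (-(u * ψ x)) ∂ω)
      (-∫ x, w x * ψ x * exp (-(u₀ * ψ x)) ∂ω) u₀ := by
  have hmeas : ∀ u, AEStronglyMeasurable (fun x => w x * exp (-(u * ψ x))) ω := fun u =>
    hw.mul (continuous_exp.comp_aestronglyMeasurable (hψ.const_mul u).neg)
  have hball : ∀ u ∈ Metric.ball u₀ 1, ‖u‖ ≤ ‖u₀‖ + 1 := fun u hu => by
    have := norm_sub_norm_le u u₀
    rw [Metric.mem_ball, dist_eq_norm] at hu
    linarith
  have hderiv := hasDerivAt_integral_of_dominated_loc_of_deriv_le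
    (F := fun u x => w x * exp (-(u * ψ x)))
    (F' := fun u x => -(w x * ψ x * exp (-(u * ψ x))))
    (bound := fun _ => Cw * Cψ * exp ((‖u₀‖ + 1) * Cψ))
    (Metric.ball_mem_nhds u₀ one_pos) (Eventually.of_forall hmeas)
    (Integrable.of_bound (hmeas u₀) _
      (ae_of_all _ fun x => norm_mul_exp_neg_mul_le (hwb x) (hψb x) le_rfl))
    ((hw.mul hψ).mul (continuous_exp.comp_aestronglyMeasurable (hψ.const_mul u₀).neg)).neg
    (ae_of_all _ fun x u hu => by
      rw [norm_neg]
      exact norm_mul_exp_neg_mul_le (norm_mul_le_of_le (hwb x) (hψb x)) (hψb x) (hball u hu))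
    (integrable_const _)
    (ae_of_all _ fun x u _ =>
      (((hasDerivAt_mul_const (ψ x)).fun_neg.exp).const_mul (w x)).congr_deriv (by ring))
  simpa only [MeasureTheory.integral_neg] using hderiv.2

variable {ι : Type*} [Fintype ι] {S : M → ι → ℝ} {C : ℝ}

noncomputable def tiltedMean (ω : Measure M) (S : M → ι → ℝ) (Y : ι → ℝ) (j : ι) : ℝ :=
  (∫ x, S x j * exp (-(Y ⬝ᵥ S x)) ∂ω) / ∫ x, exp (-(Y ⬝ᵥ S x)) ∂ω

theorem hasDerivAt_log_integral_exp_update [DecidableEq ι] [IsProbabilityMeasure ω]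
    (hS : AEStronglyMeasurable S ω) (hSb : ∀ x, ‖S x‖ ≤ C) (Y : ι → ℝ) (j : ι) :
    HasDerivAt (fun u => Real.log (∫ x, exp (-(update Y j u ⬝ᵥ S x)) ∂ω))
      (-tiltedMean ω S Y j) (Y j) := by
  have hSj : AEStronglyMeasurable (fun x => S x j) ω :=
    (continuous_apply j).comp_aestronglyMeasurable hS
  have hexp : AEStronglyMeasurable (fun x => exp (-(Y ⬝ᵥ S x))) ω :=
    continuous_exp.comp_aestronglyMeasurable
      ((continuous_const.dotProduct continuous_id).comp_aestronglyMeasurable hS).neg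
  have hZ := (hasDerivAt_integral_mul_exp_neg_mul hexp hSj (norm_exp_neg_dotProduct_le hSb Y)
    (fun x => norm_apply_le_of_norm_le hSb x j) (Y j - Y j)).comp_sub_const (Y j) (Y j)
  have hsplit : ∀ u x,
      exp (-(update Y j u ⬝ᵥ S x)) = exp (-(Y ⬝ᵥ S x)) * exp (-((u - Y j) * S x j)) := by
    intro u x; rw [update_dotProduct, ← exp_add]; ring_nf
  have hpos : 0 < ∫ x, exp (-(Y ⬝ᵥ S x)) ∂ω :=
    integral_exp_pos (Integrable.of_bound hexp _ (ae_of_all _ (norm_exp_neg_dotProduct_le hSb Y)))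
  simp_rw [hsplit]
  convert hZ.log (by simpa using hpos.ne') using 1
  simp only [tiltedMean, sub_self, zero_mul, neg_zero, exp_zero, mul_one]
  simp only [mul_comm (S _ j) (exp _), neg_div]

lemma tiltedMean_zero [IsProbabilityMeasure ω] (j : ι) : tiltedMean ω S 0 j = ∫ x, S x j ∂ω := by
  simp [tiltedMean]

theorem hasDerivAt_tiltedMean_single [DecidableEq ι] [IsProbabilityMeasure ω]
    (hS : AEStronglyMeasurable S ω) (hSb : ∀ x, ‖S x‖ ≤ C) (j k : ι) :
    HasDerivAt (fun b => tiltedMean ω S (Pi.single k b) j)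
      (-(∫ x, S x j * S x k ∂ω - (∫ x, S x j ∂ω) * ∫ x, S x k ∂ω)) 0 := by
  have hSi : ∀ i, AEStronglyMeasurable (fun x => S x i) ω := fun i =>
    (continuous_apply i).comp_aestronglyMeasurable hS
  have hn := hasDerivAt_integral_mul_exp_neg_mul (hSi j) (hSi k)
    (norm_apply_le_of_norm_le hSb · j) (norm_apply_le_of_norm_le hSb · k) 0
  have hz := hasDerivAt_integral_mul_exp_neg_mul aestronglyMeasurable_const (hSi k) (Cw := 1)
    (fun _ => norm_one.le) (norm_apply_le_of_norm_le hSb · k) 0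
  simp only [one_mul] at hz
  simp only [tiltedMean, single_dotProduct]
  exact (hn.fun_div hz (by simp)).congr_deriv (by simp; ring)

end Laplace

section MeasureTheory

variable {M : Type*} [MeasurableSpace M] {ω : Measure M}

theorem Measurable.intervalIntegral_prod_left {f : ℝ × M → ℝ} (hf : Measurable f) (a b : ℝ) :
    Measurable fun x => ∫ s in a..b, f (s, x) :=
  (hf.stronglyMeasurable.integral_prod_left' (μ := volume.restrict (Ioc a b))).measurable.sub
    (hf.stronglyMeasurable.integral_prod_left' (μ := volume.restrict (Ioc b a))).measurable

theorem intervalIntegral_integral_swap_of_norm_le [IsFiniteMeasure ω] {f : ℝ → M → ℝ}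
    (hf : Measurable (uncurry f)) {C : ℝ} (hC : ∀ s x, ‖f s x‖ ≤ C) (a b : ℝ) :
    ∫ s in a..b, ∫ x, f s x ∂ω = ∫ x, (∫ s in a..b, f s x) ∂ω := by
  have : IsFiniteMeasure (volume.restrict (uIoc a b)) :=
    isFiniteMeasure_restrict.2 measure_Ioc_lt_top.ne
  exact intervalIntegral_integral_swap
    (Integrable.of_bound hf.aestronglyMeasurable C (ae_of_all _ fun p => hC p.1 p.2))

lemma integral_comp_of_map_eq {f : M → M} (hf : Measurable f) (hω : ω.map f = ω) {g : M → ℝ}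
    (hg : AEStronglyMeasurable g ω) : ∫ x, g (f x) ∂ω = ∫ x, g x ∂ω := by
  rw [← integral_map hf.aemeasurable (by rwa [hω]), hω]

lemma integral_eq_zero_of_comp_eq_neg {θ : M → M} (hθ : Measurable θ) (hθω : ω.map θ = ω)
    {f : M → ℝ} (hf : AEStronglyMeasurable f ω) (hodd : ∀ᵐ x ∂ω, f (θ x) = -f x) :
    ∫ x, f x ∂ω = 0 := by
  have h := integral_comp_of_map_eq hθ hθω hf
  rw [integral_congr_ae hodd, MeasureTheory.integral_neg] at h
  linarith

end MeasureTheory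

section FluxIntegral

variable {M ι : Type*} {T : ℝ → M → M} {Φ : M → ι → ℝ} {C : ℝ}

noncomputable def fluxIntegral (T : ℝ → M → M) (Φ : M → ι → ℝ) (t : ℝ) (x : M) : ι → ℝ :=
  fun i => ∫ s in 0..t, Φ (T s x) i

lemma fluxIntegral_flow (hTadd : ∀ s t, T (s + t) = T s ∘ T t) (t a : ℝ) (x : M) :
    fluxIntegral T Φ t (T a x) = fun i => ∫ s in a..a + t, Φ (T s x) i := by
  ext i
  simp only [fluxIntegral, ← comp_apply (f := T _), ← hTadd]
  rw [intervalIntegral.integral_comp_add_right (fun s => Φ (T s x) i), zero_add, add_comm]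

lemma flow_apply_flow_neg (hT0 : T 0 = id) (hTadd : ∀ s t, T (s + t) = T s ∘ T t) (s : ℝ)
    (x : M) : T s (T (-s) x) = x := by
  rw [← comp_apply (f := T s), ← hTadd, add_neg_cancel, hT0, id]

lemma norm_fluxIntegral_le [Fintype ι] (hΦb : ∀ x, ‖Φ x‖ ≤ C) (t : ℝ) (x : M) :
    ‖fluxIntegral T Φ t x‖ ≤ C * |t| := by
  have hC : 0 ≤ C := (norm_nonneg _).trans (hΦb x)
  refine (pi_norm_le_iff_of_nonneg (by positivity)).2 fun i => ?_
  simpa [fluxIntegral] using intervalIntegral.norm_integral_le_of_norm_le_const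
    (a := 0) (b := t) fun s _ => (norm_le_pi_norm _ i).trans (hΦb (T s x))

lemma norm_flux_mul_flux_le [Fintype ι] (hΦb : ∀ x, ‖Φ x‖ ≤ C) (k j : ι) (s : ℝ) (x : M) :
    ‖Φ x k * Φ (T s x) j‖ ≤ C * C :=
  norm_mul_le_of_le (norm_apply_le_of_norm_le hΦb x k) (norm_apply_le_of_norm_le hΦb _ j)

variable [MeasurableSpace M] {ω : Measure M}

lemma measurable_flux_apply (hT : Measurable fun p : ℝ × M => T p.1 p.2) (hΦ : Measurable Φ)
    (i : ι) : Measurable fun p : ℝ × M => Φ (T p.1 p.2) i :=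
  (measurable_pi_apply i).comp (hΦ.comp hT)

lemma measurable_fluxIntegral (hT : Measurable fun p : ℝ × M => T p.1 p.2) (hΦ : Measurable Φ)
    (t : ℝ) : Measurable (fluxIntegral T Φ t) :=
  measurable_pi_lambda _ fun i => (measurable_flux_apply hT hΦ i).intervalIntegral_prod_left 0 t

lemma measurable_flux_mul_flux (hT : Measurable fun p : ℝ × M => T p.1 p.2) (hΦ : Measurable Φ)
    (k j : ι) : Measurable fun p : ℝ × M => Φ p.2 k * Φ (T p.1 p.2) j :=
  ((measurable_pi_apply k).comp (hΦ.comp measurable_snd)).mul (measurable_flux_apply hT hΦ j)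

noncomputable def correlation (ω : Measure M) (T : ℝ → M → M) (Φ : M → ι → ℝ) (k j : ι)
    (s : ℝ) : ℝ :=
  ∫ x, Φ x k * Φ (T s x) j ∂ω

theorem fluxIntegral_comp_timeReversal [Countable ι] [SFinite ω]
    (hTadd : ∀ s t, T (s + t) = T s ∘ T t) (hTm : ∀ t, Measurable (T t))
    (hT : Measurable fun p : ℝ × M => T p.1 p.2)
    (hqi : ∀ t, ω.map (T t) ≪ ω) (hΦ : Measurable Φ) {θ : M → M} (hθ : Measurable θ)
    (hθT : ∀ t, θ ∘ T t = T (-t) ∘ θ) (hθΦ : ∀ᵐ x ∂ω, Φ (θ x) = -Φ x) (t : ℝ) :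
    ∀ᵐ x ∂ω, fluxIntegral T Φ t (θ x) = -fluxIntegral T Φ t (T (-t) x) := by
  have hT' : Measurable fun p : ℝ × M => T (-p.1) p.2 :=
    hT.comp (measurable_fst.neg.prodMk measurable_snd)
  have hodd : ∀ᵐ x ∂ω, ∀ᵐ s ∂volume, Φ (θ (T (-s) x)) = -Φ (T (-s) x) :=
    (Measure.ae_ae_comm (p := fun s x => Φ (θ (T (-s) x)) = -Φ (T (-s) x))
      (measurableSet_eq_fun (hΦ.comp (hθ.comp hT')) (hΦ.comp hT').neg)).1
      (ae_of_all _ fun s => (Measure.QuasiMeasurePreserving.ae ⟨hTm (-s), hqi (-s)⟩ hθΦ))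
  filter_upwards [hodd] with x hx
  ext i
  have hθflow : ∀ s, T s (θ x) = θ (T (-s) x) := fun s => by
    simpa using (congrFun (hθT (-s)) x).symm
  calc fluxIntegral T Φ t (θ x) i = ∫ s in 0..t, Φ (θ (T (-s) x)) i := by
        simp only [fluxIntegral, hθflow]
    _ = ∫ s in 0..t, -Φ (T (-s) x) i :=
        intervalIntegral.integral_congr_ae (hx.mono fun s hs _ => by rw [hs, Pi.neg_apply])
    _ = -fluxIntegral T Φ t (T (-t) x) i := by
        rw [intervalIntegral.integral_neg,
          intervalIntegral.integral_comp_neg (fun s => Φ (T s x) i), fluxIntegral_flow hTadd]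
        simp

variable [Fintype ι]

lemma intervalIntegrable_flux (hT : Measurable fun p : ℝ × M => T p.1 p.2) (hΦ : Measurable Φ)
    (hΦb : ∀ x, ‖Φ x‖ ≤ C) (x : M) (i : ι) (a b : ℝ) :
    IntervalIntegrable (fun s => Φ (T s x) i) volume a b :=
  intervalIntegrable_of_norm_le ((measurable_flux_apply hT hΦ i).comp
    (measurable_id.prodMk measurable_const)).aestronglyMeasurable
    (fun _ => norm_apply_le_of_norm_le hΦb _ i) a b

lemma dotProduct_fluxIntegral (hT : Measurable fun p : ℝ × M => T p.1 p.2) (hΦ : Measurable Φ)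
    (hΦb : ∀ x, ‖Φ x‖ ≤ C) (X : ι → ℝ) (t : ℝ) (x : M) :
    X ⬝ᵥ fluxIntegral T Φ t x = ∫ s in 0..t, X ⬝ᵥ Φ (T s x) := by
  simp only [dotProduct, fluxIntegral]
  rw [intervalIntegral.integral_finsetSum fun i _ =>
    (intervalIntegrable_flux hT hΦ hΦb x i 0 t).const_mul _]
  simp_rw [intervalIntegral.integral_const_mul]

lemma integral_fluxIntegral [IsFiniteMeasure ω] (hT : Measurable fun p : ℝ × M => T p.1 p.2)
    (hΦ : Measurable Φ) (hΦb : ∀ x, ‖Φ x‖ ≤ C) (t : ℝ) (i : ι) :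
    ∫ x, fluxIntegral T Φ t x i ∂ω = ∫ s in 0..t, ∫ x, Φ (T s x) i ∂ω :=
  (intervalIntegral_integral_swap_of_norm_le (measurable_flux_apply hT hΦ i)
    (fun _ _ => norm_apply_le_of_norm_le hΦb _ i) 0 t).symm

theorem rnDeriv_map_flow_eq_exp [IsFiniteMeasure ω] (hT0 : T 0 = id)
    (hTadd : ∀ s t, T (s + t) = T s ∘ T t) (hTm : ∀ t, Measurable (T t))
    (hT : Measurable fun p : ℝ × M => T p.1 p.2)
    (hequiv : ∀ t, ω.map (T t) ≪ ω ∧ ω ≪ ω.map (T t)) (hΦ : Measurable Φ)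
    (hΦb : ∀ x, ‖Φ x‖ ≤ C) {X : ι → ℝ}
    (hcoc : ∀ t, ∀ᵐ x ∂ω, Real.log ((ω.map (T t)).rnDeriv ω (T t x)).toReal
      = ∫ s in 0..t, X ⬝ᵥ Φ (T s x)) (t : ℝ) :
    ∀ᵐ y ∂ω, ((ω.map (T (-t))).rnDeriv ω y).toReal = exp (-(X ⬝ᵥ fluxIntegral T Φ t y)) := by
  set μ := ω.map (T (-t))
  have := Measure.isFiniteMeasure_map ω (T (-t))
  have hback : ∀ y, T (-t) (T t y) = y := fun y => by
    simpa using flow_apply_flow_neg hT0 hTadd (-t) y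
  have hlog : ∀ᵐ y ∂ω, Real.log (μ.rnDeriv ω y).toReal = -(X ⬝ᵥ fluxIntegral T Φ t y) := by
    filter_upwards [Measure.QuasiMeasurePreserving.ae ⟨hTm t, (hequiv t).1⟩ (hcoc (-t))]
      with y hy
    rw [hback] at hy
    rw [hy, dotProduct_fluxIntegral hT hΦ hΦb]
    simp only [← comp_apply (f := T _), ← hTadd]
    rw [intervalIntegral.integral_comp_add_right (fun s => X ⬝ᵥ Φ (T s y)), zero_add,
      neg_add_cancel, intervalIntegral.integral_symm]
  have hpos : ∀ᵐ y ∂ω, 0 < μ.rnDeriv ω y :=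
    (hequiv (-t)).2.ae_le (Measure.rnDeriv_pos (hequiv (-t)).1)
  filter_upwards [hlog, hpos, Measure.rnDeriv_lt_top μ ω] with y hlog hpos hfin
  rw [← hlog, exp_log (ENNReal.toReal_pos hpos.ne' hfin.ne)]

theorem integral_fluxIntegral_eq_zero [IsFiniteMeasure ω] (hTm : ∀ t, Measurable (T t))
    (hT : Measurable fun p : ℝ × M => T p.1 p.2) (hinv : ∀ t, ω.map (T t) = ω)
    (hΦ : Measurable Φ) (hΦb : ∀ x, ‖Φ x‖ ≤ C) {θ : M → M} (hθ : Measurable θ)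
    (hθω : ω.map θ = ω) (hθΦ : ∀ᵐ x ∂ω, Φ (θ x) = -Φ x) (t : ℝ) (i : ι) :
    ∫ x, fluxIntegral T Φ t x i ∂ω = 0 := by
  have hΦi : AEStronglyMeasurable (fun x => Φ x i) ω :=
    ((measurable_pi_apply i).comp hΦ).aestronglyMeasurable
  have hmean : ∫ x, Φ x i ∂ω = 0 := integral_eq_zero_of_comp_eq_neg hθ hθω hΦi
    (hθΦ.mono fun x hx => by rw [hx, Pi.neg_apply])
  rw [integral_fluxIntegral hT hΦ hΦb, intervalIntegral.integral_congr (g := fun _ => 0)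
    fun s _ => (integral_comp_of_map_eq (hTm s) (hinv s) hΦi).trans hmean]
  simp

theorem hasDerivAt_neg_tiltedMean_fluxIntegral_single [DecidableEq ι] [IsProbabilityMeasure ω]
    (hTm : ∀ t, Measurable (T t)) (hT : Measurable fun p : ℝ × M => T p.1 p.2)
    (hinv : ∀ t, ω.map (T t) = ω) (hΦ : Measurable Φ) (hΦb : ∀ x, ‖Φ x‖ ≤ C) {θ : M → M}
    (hθ : Measurable θ) (hθω : ω.map θ = ω) (hθΦ : ∀ᵐ x ∂ω, Φ (θ x) = -Φ x) (t : ℝ) (j k : ι) :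
    HasDerivAt (fun b => -tiltedMean ω (fluxIntegral T Φ t) (Pi.single k b) j)
      (∫ x, fluxIntegral T Φ t x j * fluxIntegral T Φ t x k ∂ω) 0 := by
  have h := (hasDerivAt_tiltedMean_single (ω := ω)
    (measurable_fluxIntegral hT hΦ t).aestronglyMeasurable
    (norm_fluxIntegral_le hΦb t) j k).fun_neg
  rwa [integral_fluxIntegral_eq_zero hTm hT hinv hΦ hΦb hθ hθω hθΦ, zero_mul, sub_zero,
    neg_neg] at h

lemma intervalIntegrable_correlation [IsFiniteMeasure ω]
    (hT : Measurable fun p : ℝ × M => T p.1 p.2) (hΦ : Measurable Φ) (hΦb : ∀ x, ‖Φ x‖ ≤ C)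
    (k j : ι) (a b : ℝ) : IntervalIntegrable (correlation ω T Φ k j) volume a b := by
  have hmeas := (measurable_flux_mul_flux hT hΦ k j).stronglyMeasurable.integral_prod_right'
    (ν := ω)
  exact intervalIntegrable_of_norm_le hmeas.aestronglyMeasurable
    (fun s => norm_integral_le_of_norm_le_const (ae_of_all _ (norm_flux_mul_flux_le hΦb k j s)))
    a b

theorem integral_fluxIntegral_mul_flux_comp [IsFiniteMeasure ω] (hT0 : T 0 = id)
    (hTadd : ∀ s t, T (s + t) = T s ∘ T t) (hTm : ∀ t, Measurable (T t))
    (hT : Measurable fun p : ℝ × M => T p.1 p.2) (hinv : ∀ t, ω.map (T t) = ω)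
    (hΦ : Measurable Φ) (hΦb : ∀ x, ‖Φ x‖ ≤ C) (t u : ℝ) (j k : ι) :
    ∫ x, fluxIntegral T Φ t x j * Φ (T u x) k ∂ω = ∫ r in -u..t - u, correlation ω T Φ k j r := by
  rw [← integral_comp_of_map_eq (hTm (-u)) (hinv (-u))
    (g := fun x => fluxIntegral T Φ t x j * Φ (T u x) k)
    (((measurable_pi_apply j).comp (measurable_fluxIntegral hT hΦ t)).mul
      ((measurable_pi_apply k).comp (hΦ.comp (hTm u)))).aestronglyMeasurable]
  unfold correlation
  rw [intervalIntegral_integral_swap_of_norm_le (measurable_flux_mul_flux hT hΦ k j)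
      (norm_flux_mul_flux_le hΦb k j)]
  refine integral_congr_ae (ae_of_all _ fun y => ?_)
  simp only [flow_apply_flow_neg hT0 hTadd, fluxIntegral_flow hTadd, neg_add_eq_sub,
    mul_comm _ (Φ y k)]
  exact (intervalIntegral.integral_const_mul _ _).symm

theorem integral_fluxIntegral_mul_fluxIntegral [IsFiniteMeasure ω] (hT0 : T 0 = id)
    (hTadd : ∀ s t, T (s + t) = T s ∘ T t) (hTm : ∀ t, Measurable (T t))
    (hT : Measurable fun p : ℝ × M => T p.1 p.2) (hinv : ∀ t, ω.map (T t) = ω)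
    (hΦ : Measurable Φ) (hΦb : ∀ x, ‖Φ x‖ ≤ C) {t : ℝ} (ht : 0 < t) (j k : ι) :
    ∫ x, fluxIntegral T Φ t x j * fluxIntegral T Φ t x k ∂ω
      = t * ∫ s in -t..t, correlation ω T Φ k j s * (1 - |s| / t) := by
  have hSΦ : ∀ u x, ‖fluxIntegral T Φ t x j * Φ (T u x) k‖ ≤ C * |t| * C := fun u x =>
    norm_mul_le_of_le (norm_apply_le_of_norm_le (norm_fluxIntegral_le hΦb t) x j)
      (norm_apply_le_of_norm_le hΦb _ k)
  calc ∫ x, fluxIntegral T Φ t x j * fluxIntegral T Φ t x k ∂ω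
      = ∫ x, (∫ u in 0..t, fluxIntegral T Φ t x j * Φ (T u x) k) ∂ω :=
        integral_congr_ae (ae_of_all _ fun x => (intervalIntegral.integral_const_mul _ _).symm)
    _ = ∫ u in 0..t, ∫ x, fluxIntegral T Φ t x j * Φ (T u x) k ∂ω :=
        (intervalIntegral_integral_swap_of_norm_le
          ((((measurable_pi_apply j).comp (measurable_fluxIntegral hT hΦ t)).comp
            measurable_snd).mul (measurable_flux_apply hT hΦ k)) hSΦ 0 t).symm
    _ = ∫ u in 0..t, ∫ r in -u..t - u, correlation ω T Φ k j r := by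
        simp_rw [integral_fluxIntegral_mul_flux_comp hT0 hTadd hTm hT hinv hΦ hΦb]
    _ = ∫ s in -t..t, correlation ω T Φ k j s * (t - |s|) :=
        integral_integral_shift_eq_integral_mul_tent
          (intervalIntegrable_correlation hT hΦ hΦb k j) ht.le
    _ = t * ∫ s in -t..t, correlation ω T Φ k j s * (1 - |s| / t) := by
        rw [← intervalIntegral.integral_const_mul]
        congr 1; ext s; field_simp

end FluxIntegral

section EvansSearles

variable {M : Type*} [MeasurableSpace M] {ω : Measure M} {N : ℕ} {T : ℝ → M → M}
  {Φ : M → Fin N → ℝ} {C : ℝ}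

lemma gES_eq (ω : Measure M) (T : ℝ → M → M) (Φ : M → Fin N → ℝ) (t : ℝ) (Y : Fin N → ℝ) :
    gES ω T Φ t Y = Real.log (∫ x, exp (-(Y ⬝ᵥ fluxIntegral T Φ t x)) ∂ω) := rfl

theorem hasDerivAt_gES_update [IsProbabilityMeasure ω]
    (hT : Measurable fun p : ℝ × M => T p.1 p.2) (hΦ : Measurable Φ) (hΦb : ∀ x, ‖Φ x‖ ≤ C)
    (t : ℝ) (Y : Fin N → ℝ) (j : Fin N) :
    HasDerivAt (fun u => gES ω T Φ t (update Y j u)) (-tiltedMean ω (fluxIntegral T Φ t) Y j)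
      (Y j) :=
  hasDerivAt_log_integral_exp_update (measurable_fluxIntegral hT hΦ t).aestronglyMeasurable
    (norm_fluxIntegral_le hΦb t) Y j

theorem fluxAvg_eq_of_hasDerivAt_gES [IsProbabilityMeasure ω]
    (hT : Measurable fun p : ℝ × M => T p.1 p.2) (hΦ : Measurable Φ) (hΦb : ∀ x, ‖Φ x‖ ≤ C)
    {t : ℝ} {j : Fin N} {G : ℝ} (hG : HasDerivAt (fun u => gES ω T Φ t (update 0 j u)) G 0) :
    fluxAvg ω T Φ t j = -(1 / t) * G := by
  rw [hG.unique (hasDerivAt_gES_update hT hΦ hΦb t 0 j), tiltedMean_zero,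
    integral_fluxIntegral hT hΦ hΦb, fluxAvg, neg_mul_neg]

theorem gES_eq_gES_sub [IsFiniteMeasure ω] (hT0 : T 0 = id)
    (hTadd : ∀ s t, T (s + t) = T s ∘ T t) (hTm : ∀ t, Measurable (T t))
    (hT : Measurable fun p : ℝ × M => T p.1 p.2)
    (hequiv : ∀ t, ω.map (T t) ≪ ω ∧ ω ≪ ω.map (T t)) (hΦ : Measurable Φ)
    (hΦb : ∀ x, ‖Φ x‖ ≤ C) {X : Fin N → ℝ}
    (hcoc : ∀ t, ∀ᵐ x ∂ω, Real.log ((ω.map (T t)).rnDeriv ω (T t x)).toReal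
      = ∫ s in 0..t, X ⬝ᵥ Φ (T s x))
    {θ : M → M} (hθ : Measurable θ) (hθT : ∀ t, θ ∘ T t = T (-t) ∘ θ) (hθω : ω.map θ = ω)
    (hθΦ : ∀ᵐ x ∂ω, Φ (θ x) = -Φ x) (t : ℝ) (Y : Fin N → ℝ) :
    gES ω T Φ t Y = gES ω T Φ t (X - Y) := by
  have hS := measurable_fluxIntegral hT hΦ t
  have := Measure.isFiniteMeasure_map ω (T (-t))
  rw [gES_eq, gES_eq]
  congr 1
  calc ∫ x, exp (-(Y ⬝ᵥ fluxIntegral T Φ t x)) ∂ω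
      = ∫ x, exp (-(Y ⬝ᵥ fluxIntegral T Φ t (θ x))) ∂ω :=
        (integral_comp_of_map_eq hθ hθω (by fun_prop)).symm
    _ = ∫ x, exp (Y ⬝ᵥ fluxIntegral T Φ t (T (-t) x)) ∂ω := integral_congr_ae <| by
        filter_upwards [fluxIntegral_comp_timeReversal hTadd hTm hT (fun t => (hequiv t).1) hΦ hθ
          hθT hθΦ t] with x hx
        rw [hx, dotProduct_neg, neg_neg]
    _ = ∫ y, exp (Y ⬝ᵥ fluxIntegral T Φ t y) ∂(ω.map (T (-t))) :=
        (integral_map (hTm _).aemeasurable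
          (f := fun y => exp (Y ⬝ᵥ fluxIntegral T Φ t y)) (by fun_prop)).symm
    _ = ∫ y, ((ω.map (T (-t))).rnDeriv ω y).toReal • exp (Y ⬝ᵥ fluxIntegral T Φ t y) ∂ω :=
        (integral_rnDeriv_smul (hequiv (-t)).1).symm
    _ = ∫ y, exp (-((X - Y) ⬝ᵥ fluxIntegral T Φ t y)) ∂ω := integral_congr_ae <| by
        filter_upwards [rnDeriv_map_flow_eq_exp hT0 hTadd hTm hT hequiv hΦ hΦb hcoc t] with y hy
        rw [smul_eq_mul, hy, ← exp_add, sub_dotProduct]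
        ring_nf

end EvansSearles

theorem finite_time_green_kubo_onsager_general
    {M : Type*} [MeasurableSpace M] {N : ℕ}
    (T : (Fin N → ℝ) → ℝ → M → M)
    (hT0 : ∀ X, T X 0 = id)
    (hTadd : ∀ X (s t : ℝ), T X (s + t) = T X s ∘ T X t)
    (hTm : ∀ X (t : ℝ), Measurable (T X t))
    (hTjoint : ∀ X, Measurable fun p : ℝ × M => T X p.1 p.2)
    (ω : (Fin N → ℝ) → Measure M)
    (hωprob : ∀ X, IsProbabilityMeasure (ω X))
    (hequiv : ∀ X (t : ℝ), (ω X).map (T X t) ≪ ω X ∧ ω X ≪ (ω X).map (T X t))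
    (Φ : (Fin N → ℝ) → M → Fin N → ℝ)
    (hΦm : ∀ X, Measurable (Φ X))
    (hΦb : ∀ X, ∃ C : ℝ, ∀ x, ‖Φ X x‖ ≤ C)
    -- the entropy cocycle of `(M, φ_X, ω_X)` satisfies `c_X^t = ∫_0^t (X·Φ_X)∘φ_X^s ds`
    (hcoc : ∀ X (t : ℝ), ∀ᵐ x ∂(ω X),
      Real.log ((((ω X).map (T X t)).rnDeriv (ω X) (T X t x)).toReal)
        = ∫ s in (0:ℝ)..t, ∑ i, X i * Φ X (T X s x) i)
    -- (T1): `ω_0` is invariant under `φ_0^t`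
    (hT1 : ∀ t : ℝ, (ω 0).map (T 0 t) = ω 0)
    -- (T2): time-reversal invariance with `Φ_X ∘ θ_X = -Φ_X`
    (hT2 : ∀ X, ∃ θ : M → M, Measurable θ ∧ (∀ x, θ (θ x) = x) ∧
      (∀ t : ℝ, θ ∘ T X t = T X (-t) ∘ θ) ∧ (ω X).map θ = ω X ∧
      (∀ᵐ x ∂(ω X), Φ X (θ x) = -Φ X x))
    (t : ℝ) (ht : 0 < t)
    -- `g_t(X,Y)` is `C^{1,2}` in a neighborhood `U` of `(0,0)`: all the listed partial
    -- derivatives exist and are continuous on `U`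
    (U : Set ((Fin N → ℝ) × (Fin N → ℝ))) (hU : IsOpen U)
    (hU0 : ((0 : Fin N → ℝ), (0 : Fin N → ℝ)) ∈ U)
    (GY : Fin N → (Fin N → ℝ) → (Fin N → ℝ) → ℝ)
    (GXY : Fin N → Fin N → (Fin N → ℝ) → (Fin N → ℝ) → ℝ)
    (hGY : ∀ i, ∀ p ∈ U, HasDerivAt
      (fun u => gES (ω p.1) (T p.1) (Φ p.1) t (Function.update p.2 i u))
      (GY i p.1 p.2) (p.2 i))
    (hGXY : ∀ k i, ∀ p ∈ U, HasDerivAt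
      (fun u => GY i (Function.update p.1 k u) p.2) (GXY k i p.1 p.2) (p.1 k))
    (hGXYc : ∀ k i, ContinuousOn (fun p : (Fin N → ℝ) × (Fin N → ℝ) => GXY k i p.1 p.2) U) :
    ∃ L : Fin N → Fin N → ℝ,
      (∀ j k, HasDerivAt
        (fun u => fluxAvg (ω (Function.update (0 : Fin N → ℝ) k u))
          (T (Function.update (0 : Fin N → ℝ) k u))
          (Φ (Function.update (0 : Fin N → ℝ) k u)) t j) (L j k) 0) ∧
      (∀ j k, L j k = (1 / 2) *
        ∫ s in (-t)..t, (∫ x, Φ 0 x k * Φ 0 (T 0 s x) j ∂(ω 0)) * (1 - |s| / t)) ∧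
      (∀ j k, L j k = L k j) := by
  choose C hC using hΦb
  have hnear : ∀ f : ℝ → (Fin N → ℝ) × (Fin N → ℝ), Continuous f → f 0 = (0, 0) →
      ∀ᶠ u in 𝓝 0, f u ∈ U := fun f hf hf0 =>
    hf.continuousAt.preimage_mem_nhds (hf0 ▸ hU.mem_nhds hU0)
  have hsymm : ∀ X Y, gES (ω X) (T X) (Φ X) t Y = gES (ω X) (T X) (Φ X) t (X - Y) := by
    intro X Y
    obtain ⟨θ, hθ, -, hθT, hθω, hθΦ⟩ := hT2 X
    exact gES_eq_gES_sub (hT0 X) (hTadd X) (hTm X) (hTjoint X) (hequiv X) (hΦm X) (hC X)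
      (hcoc X) hθ hθT hθω hθΦ t Y
  obtain ⟨θ, hθ, -, -, hθω, hθΦ⟩ := hT2 0
  have hXY : ∀ j k, GXY k j 0 0
      = -(∫ x, fluxIntegral (T 0) (Φ 0) t x j * fluxIntegral (T 0) (Φ 0) t x k ∂(ω 0)) / 2 :=
    fun j k => mixedPartial_eq_neg_half_of_symm hU hU0 hsymm (hGY j) (hGXY k j) (hGXYc k j) <|
      (hasDerivAt_neg_tiltedMean_fluxIntegral_single (hTm 0) (hTjoint 0) hT1 (hΦm 0) (hC 0)
        hθ hθω hθΦ t j k).congr_of_eventuallyEq <| by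
      filter_upwards [hnear (fun b => (0, update 0 k b)) (by fun_prop) (by simp)] with b hb
      exact (hGY j _ hb).unique (hasDerivAt_gES_update (hTjoint 0) (hΦm 0) (hC 0) t _ j)
  refine ⟨fun j k => -(1 / t) * GXY k j 0 0, fun j k => ?_, fun j k => ?_, fun j k => ?_⟩
  · have hd : HasDerivAt (fun u => GY j (update 0 k u) 0) (GXY k j 0 0) 0 := by
      simpa only [Pi.zero_apply] using hGXY k j (0, 0) hU0
    refine (hd.const_mul _).congr_of_eventuallyEq ?_
    filter_upwards [hnear (fun u => (update 0 k u, 0)) (by fun_prop) (by simp)] with u hu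
    exact fluxAvg_eq_of_hasDerivAt_gES (hTjoint _) (hΦm _) (hC _)
      (by simpa only [Pi.zero_apply] using hGY j _ hu)
  · dsimp only
    rw [hXY, integral_fluxIntegral_mul_fluxIntegral (hT0 0) (hTadd 0) (hTm 0) (hTjoint 0) hT1
      (hΦm 0) (hC 0) ht]
    unfold correlation
    field_simp
  · simp only [hXY, mul_comm]

/-- Finite time Green–Kubo formula and Onsager reciprocity relations. Under (T1), (T2) and
the `C^{1,2}` regularity of `g_t(X,Y)` near `(0,0)`, the map `X ↦ ⟨Φ_X^{(j)}⟩_t` has partial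
derivatives at `X = 0`, and the finite time kinetic transport coefficients
`L_{jkt} = ∂_{X_k}⟨Φ_X^{(j)}⟩_t|_{X=0}` satisfy
`L_{jkt} = (1/2)∫_{-t}^t ω(Φ^{(k)}·Φ^{(j)}∘φ^s)(1-|s|/t) ds` and `L_{jkt} = L_{kjt}`. -/
theorem finite_time_green_kubo_onsager
    {M : Type*} [MeasurableSpace M] {N : ℕ}
    (T : (Fin N → ℝ) → ℝ → M → M)
    (hT0 : ∀ X, T X 0 = id)
    (hTadd : ∀ X (s t : ℝ), T X (s + t) = T X s ∘ T X t)
    (hTm : ∀ X (t : ℝ), Measurable (T X t))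
    (hTjoint : ∀ X, Measurable fun p : ℝ × M => T X p.1 p.2)
    (ω : (Fin N → ℝ) → Measure M)
    (hωprob : ∀ X, IsProbabilityMeasure (ω X))
    (hequiv : ∀ X (t : ℝ), (ω X).map (T X t) ≪ ω X ∧ ω X ≪ (ω X).map (T X t))
    (Φ : (Fin N → ℝ) → M → Fin N → ℝ)
    (hΦm : ∀ X, Measurable (Φ X))
    (hΦb : ∀ X, ∃ C : ℝ, ∀ x, ‖Φ X x‖ ≤ C)
    -- the entropy cocycle of `(M, φ_X, ω_X)` satisfies `c_X^t = ∫_0^t (X·Φ_X)∘φ_X^s ds`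
    (hcoc : ∀ X (t : ℝ), ∀ᵐ x ∂(ω X),
      Real.log ((((ω X).map (T X t)).rnDeriv (ω X) (T X t x)).toReal)
        = ∫ s in (0:ℝ)..t, ∑ i, X i * Φ X (T X s x) i)
    -- (T1): `ω_0` is invariant under `φ_0^t`
    (hT1 : ∀ t : ℝ, (ω 0).map (T 0 t) = ω 0)
    -- (T2): time-reversal invariance with `Φ_X ∘ θ_X = -Φ_X`
    (hT2 : ∀ X, ∃ θ : M → M, Measurable θ ∧ (∀ x, θ (θ x) = x) ∧
      (∀ t : ℝ, θ ∘ T X t = T X (-t) ∘ θ) ∧ (ω X).map θ = ω X ∧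
      (∀ᵐ x ∂(ω X), Φ X (θ x) = -Φ X x))
    (t : ℝ) (ht : 0 < t)
    -- `g_t(X,Y)` is `C^{1,2}` in a neighborhood `U` of `(0,0)`: all the listed partial
    -- derivatives exist and are continuous on `U`
    (U : Set ((Fin N → ℝ) × (Fin N → ℝ))) (hU : IsOpen U)
    (hU0 : ((0 : Fin N → ℝ), (0 : Fin N → ℝ)) ∈ U)
    (GX GY : Fin N → (Fin N → ℝ) → (Fin N → ℝ) → ℝ)
    (GYY GXY GYX : Fin N → Fin N → (Fin N → ℝ) → (Fin N → ℝ) → ℝ)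
    (hGX : ∀ i, ∀ p ∈ U, HasDerivAt
      (fun u => gES (ω (Function.update p.1 i u)) (T (Function.update p.1 i u))
        (Φ (Function.update p.1 i u)) t p.2) (GX i p.1 p.2) (p.1 i))
    (hGXc : ∀ i, ContinuousOn (fun p : (Fin N → ℝ) × (Fin N → ℝ) => GX i p.1 p.2) U)
    (hGY : ∀ i, ∀ p ∈ U, HasDerivAt
      (fun u => gES (ω p.1) (T p.1) (Φ p.1) t (Function.update p.2 i u))
      (GY i p.1 p.2) (p.2 i))
    (hGYc : ∀ i, ContinuousOn (fun p : (Fin N → ℝ) × (Fin N → ℝ) => GY i p.1 p.2) U)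
    (hGYY : ∀ j k, ∀ p ∈ U, HasDerivAt
      (fun u => GY k p.1 (Function.update p.2 j u)) (GYY j k p.1 p.2) (p.2 j))
    (hGYYc : ∀ j k, ContinuousOn (fun p : (Fin N → ℝ) × (Fin N → ℝ) => GYY j k p.1 p.2) U)
    (hGXY : ∀ k i, ∀ p ∈ U, HasDerivAt
      (fun u => GY i (Function.update p.1 k u) p.2) (GXY k i p.1 p.2) (p.1 k))
    (hGXYc : ∀ k i, ContinuousOn (fun p : (Fin N → ℝ) × (Fin N → ℝ) => GXY k i p.1 p.2) U)
    (hGYX : ∀ i k, ∀ p ∈ U, HasDerivAt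
      (fun u => GX k p.1 (Function.update p.2 i u)) (GYX i k p.1 p.2) (p.2 i))
    (hGYXc : ∀ i k, ContinuousOn (fun p : (Fin N → ℝ) × (Fin N → ℝ) => GYX i k p.1 p.2) U) :
    ∃ L : Fin N → Fin N → ℝ,
      (∀ j k, HasDerivAt
        (fun u => fluxAvg (ω (Function.update (0 : Fin N → ℝ) k u))
          (T (Function.update (0 : Fin N → ℝ) k u))
          (Φ (Function.update (0 : Fin N → ℝ) k u)) t j) (L j k) 0) ∧
      (∀ j k, L j k = (1 / 2) *
        ∫ s in (-t)..t, (∫ x, Φ 0 x k * Φ 0 (T 0 s x) j ∂(ω 0)) * (1 - |s| / t)) ∧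
      (∀ j k, L j k = L k j) :=
  finite_time_green_kubo_onsager_general T hT0 hTadd hTm hTjoint ω hωprob hequiv Φ hΦm hΦb hcoc hT1
    hT2 t ht U hU hU0 GY GXY hGY hGXY hGXYc
end

section
/- Let ϑ : M → M be a continuous involution (ϑ ∘ ϑ = id) with ϑ ∘ φ = φ^{−1} ∘ ϑ such that the metric d_ϑ(x,y) := d(ϑ(x),ϑ(y)) is equivalent to d. Let ω be a Borel probability measure on M with ω ∘ ϑ = ω and such that the pushforward ω_1 := ω ∘ φ^{−1} is equivalent to ω, and suppose the entropy production observable σ := (log dω_1/dω) ∘ φ has a continuous version (σ continuous with σ = (log dω_1/dω) ∘ φ ω-a.e.). Let V : M → ℝ be continuous with ω ∈ S_V. Then σ is physically equivalent to σ̃_V := V − V ∘ ϑ, i.e. lim_{n→∞} (1/n) sup_{x∈M} |S_n σ(x) − S_n σ̃_V(x)| = 0. -/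
open MeasureTheory Filter

section TopDyn

variable {M : Type*} [MetricSpace M]

/-- Birkhoff sum `S_n f := Σ_{j=0}^{n-1} f ∘ φ^j`. -/
def birkhoff (φ : M → M) (f : M → ℝ) (n : ℕ) (x : M) : ℝ :=
  ∑ j ∈ Finset.range n, f (φ^[j] x)

/-- The Bowen ball `B_n(x,ε) := {y : max_{0≤j≤n-1} d(φ^j x, φ^j y) < ε}`. -/
def bowenBall (φ : M → M) (n : ℕ) (x : M) (ε : ℝ) : Set M :=
  {y | ∀ j < n, dist (φ^[j] x) (φ^[j] y) < ε}

/-- The condition `ν ∈ S_V`: for all sufficiently small `ε > 0` there are constants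
`C_n(ε) > 0` with `(1/n) log C_n(ε) → 0` such that
`C_n(ε)⁻¹ ≤ ν(B_n(x,ε)) e^{-S_n V(x)} ≤ C_n(ε)` for all `x` and `n ≥ 1`. -/
def memSV [MeasurableSpace M] (φ : M → M) (V : M → ℝ) (ν : Measure M) : Prop :=
  ∃ ε₀ > (0 : ℝ), ∀ ε : ℝ, 0 < ε → ε < ε₀ →
    ∃ C : ℕ → ℝ, (∀ n, 0 < C n) ∧
      Tendsto (fun n : ℕ => Real.log (C n) / n) atTop (nhds 0) ∧
      ∀ n : ℕ, 1 ≤ n → ∀ x : M,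
        (C n)⁻¹ ≤ (ν (bowenBall φ n x ε)).toReal * Real.exp (-(birkhoff φ V n x)) ∧
        (ν (bowenBall φ n x ε)).toReal * Real.exp (-(birkhoff φ V n x)) ≤ C n

end TopDyn


/-! Time reversal carries the Bowen ball `B_n(ϑ φ^{n-1} y, ε)` onto `φ^{n-1}` of a Bowen ball
around `y` for the metric `d_ϑ`, which lies between `B_n(y, ε / C)` and `B_n(y, C ε)`. Since `ω` is
`ϑ`-invariant and `ω(φ^m S) = ∫_S exp(-S_m σ) dω`, uniform continuity of `σ` gives
`ω(B_n(ϑ φ^{n-1} y, ε)) = exp(-S_{n-1} σ(y) ± o(n)) ω(B_n(y, ε'))` for `ε' ∈ {ε / C, C ε}`.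
Taking logarithms and using `ω ∈ S_V` at these three radii yields
`S_n V(ϑ φ^{n-1} y) - S_n V(y) = -S_n σ(y) + o(n)` uniformly in `y`, and reversing the orbit
identifies the left-hand side with `-S_n σ̃_V(y)`. -/

open Topology
open scoped ENNReal

section Birkhoff

variable {M : Type*}

theorem birkhoff_succ' (φ : M → M) (f : M → ℝ) (n : ℕ) (x : M) :
    birkhoff φ f (n + 1) x = f x + birkhoff φ f n (φ x) := by
  simp only [birkhoff, Finset.sum_range_succ', Function.iterate_succ_apply, add_comm]
  rfl

theorem birkhoff_succ (φ : M → M) (f : M → ℝ) (n : ℕ) (x : M) :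
    birkhoff φ f (n + 1) x = birkhoff φ f n x + f (φ^[n] x) :=
  Finset.sum_range_succ _ _

theorem birkhoff_sub (φ : M → M) (f g : M → ℝ) (n : ℕ) (x : M) :
    birkhoff φ (fun y => f y - g y) n x = birkhoff φ f n x - birkhoff φ g n x :=
  Finset.sum_sub_distrib _ _

theorem measurable_birkhoff [MeasurableSpace M] {φ : M → M} {f : M → ℝ} (hφ : Measurable φ)
    (hf : Measurable f) (n : ℕ) : Measurable (birkhoff φ f n) :=
  Finset.measurable_sum _ fun j _ => hf.comp (hφ.iterate j)

end Birkhoff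

section Bowen

variable {M : Type*} [MetricSpace M]

theorem bowenBall_anti {φ : M → M} {m n : ℕ} (hmn : m ≤ n) (x : M) (δ : ℝ) :
    bowenBall φ n x δ ⊆ bowenBall φ m x δ :=
  fun _ hy j hj => hy j (hj.trans_le hmn)

theorem isOpen_bowenBall {φ : M → M} (hφ : Continuous φ) (n : ℕ) (x : M) (δ : ℝ) :
    IsOpen (bowenBall φ n x δ) := by
  have : bowenBall φ n x δ = ⋂ j ∈ Set.Iio n, {y | dist (φ^[j] x) (φ^[j] y) < δ} := by
    ext y; simp [bowenBall]
  rw [this]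
  exact (Set.finite_Iio n).isOpen_biInter fun j _ =>
    isOpen_lt (continuous_const.dist (hφ.iterate j)) continuous_const

theorem abs_birkhoff_sub_le_of_mem_bowenBall {φ : M → M} {f : M → ℝ} {δ η : ℝ}
    (hf : ∀ a b, dist a b < δ → dist (f a) (f b) ≤ η) {n : ℕ} {x y : M}
    (hy : y ∈ bowenBall φ n x δ) : |birkhoff φ f n y - birkhoff φ f n x| ≤ n * η := by
  simp only [birkhoff, ← Finset.sum_sub_distrib]
  calc |∑ j ∈ Finset.range n, (f (φ^[j] y) - f (φ^[j] x))|
      ≤ ∑ j ∈ Finset.range n, |f (φ^[j] y) - f (φ^[j] x)| := Finset.abs_sum_le_sum_abs _ _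
    _ ≤ ∑ _j ∈ Finset.range n, η := Finset.sum_le_sum fun j hj =>
        hf _ _ (by rw [dist_comm]; exact hy j (Finset.mem_range.1 hj))
    _ = n * η := by simp

end Bowen

section Reversal

variable {M : Type*} [MetricSpace M] (φ : M ≃ₜ M) {ϑ : M → M}

theorem iterate_reversal_iterate (hϑφ : ∀ x, ϑ (φ x) = φ.symm (ϑ x)) {j m : ℕ} (hjm : j ≤ m)
    (w : M) : φ^[j] (ϑ (φ^[m] w)) = ϑ (φ^[m - j] w) := by
  have hsemiconj : Function.Semiconj ϑ φ.symm φ := fun v => by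
    simpa using congrArg φ (hϑφ (φ.symm v)).symm
  rw [← hsemiconj.iterate_right j, ← Nat.add_sub_cancel' hjm, Function.iterate_add_apply,
    (Function.LeftInverse.iterate φ.symm_apply_apply j) _, Nat.add_sub_cancel_left]

theorem iterate_mem_preimage_bowenBall_reversal_iff (hϑφ : ∀ x, ϑ (φ x) = φ.symm (ϑ x))
    {m : ℕ} {y w : M} {δ : ℝ} :
    φ^[m] w ∈ ϑ ⁻¹' bowenBall φ (m + 1) (ϑ (φ^[m] y)) δ ↔
      ∀ i < m + 1, dist (ϑ (φ^[i] y)) (ϑ (φ^[i] w)) < δ := by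
  have key : ∀ j < m + 1, dist (φ^[j] (ϑ (φ^[m] y))) (φ^[j] (ϑ (φ^[m] w)))
      = dist (ϑ (φ^[m - j] y)) (ϑ (φ^[m - j] w)) := fun j hj => by
    rw [iterate_reversal_iterate φ hϑφ (by omega), iterate_reversal_iterate φ hϑφ (by omega)]
  simp only [Set.mem_preimage, bowenBall, Set.mem_ofPred_eq]
  constructor
  · intro h i hi
    simpa [key (m - i) (by omega), Nat.sub_sub_self (Nat.le_of_lt_succ hi)] using
      h (m - i) (by omega)
  · intro h j hj
    rw [key j hj]
    exact h _ (by omega)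

theorem preimage_bowenBall_subset_preimage_bowenBall_reversal
    (hϑφ : ∀ x, ϑ (φ x) = φ.symm (ϑ x)) {c : ℝ} (hc : 0 < c)
    (hϑ : ∀ a b, dist (ϑ a) (ϑ b) ≤ c * dist a b) {m : ℕ} {y : M} {δ δ' : ℝ}
    (hδ : c * δ ≤ δ') :
    φ.symm^[m] ⁻¹' bowenBall φ (m + 1) y δ ⊆ ϑ ⁻¹' bowenBall φ (m + 1) (ϑ (φ^[m] y)) δ' := by
  intro z hz
  rw [← (Function.RightInverse.iterate φ.apply_symm_apply m) z,
    iterate_mem_preimage_bowenBall_reversal_iff φ hϑφ]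
  intro i hi
  calc _ ≤ c * dist (φ^[i] y) (φ^[i] (φ.symm^[m] z)) := hϑ _ _
    _ < c * δ := mul_lt_mul_of_pos_left (hz i hi) hc
    _ ≤ δ' := hδ

theorem preimage_bowenBall_reversal_subset_preimage_bowenBall
    (hϑφ : ∀ x, ϑ (φ x) = φ.symm (ϑ x)) {c : ℝ} (hc : 0 < c)
    (hϑ : ∀ a b, dist a b ≤ c * dist (ϑ a) (ϑ b)) {m : ℕ} {y : M} {δ δ' : ℝ}
    (hδ : c * δ ≤ δ') :
    ϑ ⁻¹' bowenBall φ (m + 1) (ϑ (φ^[m] y)) δ ⊆ φ.symm^[m] ⁻¹' bowenBall φ (m + 1) y δ' := by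
  intro z hz
  rw [← (Function.RightInverse.iterate φ.apply_symm_apply m) z,
    iterate_mem_preimage_bowenBall_reversal_iff φ hϑφ] at hz
  intro i hi
  calc _ ≤ c * dist (ϑ (φ^[i] y)) (ϑ (φ^[i] (φ.symm^[m] z))) := hϑ _ _
    _ < c * δ := mul_lt_mul_of_pos_left (hz i hi) hc
    _ ≤ δ' := hδ

theorem birkhoff_reversal_iterate (hϑφ : ∀ x, ϑ (φ x) = φ.symm (ϑ x)) (V : M → ℝ) (m : ℕ)
    (y : M) : birkhoff φ V (m + 1) (ϑ (φ^[m] y)) = birkhoff φ (fun z => V (ϑ z)) (m + 1) y := by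
  rw [birkhoff, ← Finset.sum_range_reflect, birkhoff]
  refine Finset.sum_congr rfl fun j hj => ?_
  have hjm : j ≤ m := Nat.lt_succ_iff.1 (Finset.mem_range.1 hj)
  rw [iterate_reversal_iterate φ hϑφ (by omega), show m - (m + 1 - 1 - j) = j by omega]

end Reversal

theorem MeasurableEquiv.map_withDensity {α β : Type*} [MeasurableSpace α] [MeasurableSpace β]
    (e : α ≃ᵐ β) (μ : Measure α) (f : α → ℝ≥0∞) :
    (μ.withDensity f).map e = (μ.map e).withDensity (f ∘ e.symm) := by
  ext s hs
  rw [e.map_apply, withDensity_apply _ (e.measurable hs), withDensity_apply _ hs, e.restrict_map,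
    lintegral_map_equiv]
  simp

section ExpDensity

variable {α : Type*} [MeasurableSpace α] (μ : Measure α) {f : α → ℝ} {S : Set α} {c a : ℝ}

theorem withDensity_exp_neg_apply_le (hS : MeasurableSet S) (h : ∀ x ∈ S, |f x - c| ≤ a) :
    μ.withDensity (fun x => ENNReal.ofReal (Real.exp (-f x))) S
      ≤ ENNReal.ofReal (Real.exp (-c + a)) * μ S := by
  rw [withDensity_apply _ hS, ← setLIntegral_const]
  refine setLIntegral_mono' hS fun x hx => ENNReal.ofReal_le_ofReal (Real.exp_le_exp.2 ?_)
  linarith [(abs_le.1 (h x hx)).1]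

theorem le_withDensity_exp_neg_apply (hS : MeasurableSet S) (h : ∀ x ∈ S, |f x - c| ≤ a) :
    ENNReal.ofReal (Real.exp (-c - a)) * μ S
      ≤ μ.withDensity (fun x => ENNReal.ofReal (Real.exp (-f x))) S := by
  rw [withDensity_apply _ hS, ← setLIntegral_const]
  refine setLIntegral_mono' hS fun x hx => ENNReal.ofReal_le_ofReal (Real.exp_le_exp.2 ?_)
  linarith [(abs_le.1 (h x hx)).2]

end ExpDensity

section ChangeOfVariables

variable {M : Type*} [MetricSpace M] [MeasurableSpace M] [BorelSpace M] (φ : M ≃ₜ M)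
  (ω : Measure M)

theorem map_symm_eq_withDensity_inv_rnDeriv [IsFiniteMeasure ω]
    (heq : ω.map φ ≪ ω ∧ ω ≪ ω.map φ) :
    ω.map φ.symm = ω.withDensity fun x => ((ω.map φ).rnDeriv ω (φ x))⁻¹ := by
  set g := (ω.map φ).rnDeriv ω
  have hω : (ω.map φ.symm).withDensity (g ∘ φ) = ω := by
    have := φ.symm.toMeasurableEquiv.map_withDensity ω g
    simp only [Homeomorph.toMeasurableEquiv_coe, Homeomorph.toMeasurableEquiv_symm_coe,
      Homeomorph.symm_symm] at this
    rw [← this, Measure.withDensity_rnDeriv_eq _ _ heq.1,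
      Measure.map_map φ.symm.measurable φ.measurable, φ.symm_comp_self, Measure.map_id]
  have hpos : ∀ᵐ x ∂ω, 0 < g x := heq.2.ae_le (Measure.rnDeriv_pos heq.1)
  have hfin : ∀ᵐ x ∂ω, g x ≠ ∞ := Measure.rnDeriv_ne_top _ _
  have := withDensity_inv_same ((Measure.measurable_rnDeriv _ _).comp φ.measurable)
    (φ.symm.measurableEmbedding.ae_map_iff.2 (by simpa using hpos.mono fun _ h => h.ne'))
    (φ.symm.measurableEmbedding.ae_map_iff.2 (by simpa using hfin))
  rw [hω] at this
  exact this.symm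

theorem map_symm_eq_withDensity_exp_neg [IsFiniteMeasure ω]
    (heq : ω.map φ ≪ ω ∧ ω ≪ ω.map φ) {σ : M → ℝ}
    (hσ : σ =ᵐ[ω] fun x => Real.log (((ω.map φ).rnDeriv ω (φ x)).toReal)) :
    ω.map φ.symm = ω.withDensity fun x => ENNReal.ofReal (Real.exp (-σ x)) := by
  rw [map_symm_eq_withDensity_inv_rnDeriv φ ω heq]
  refine withDensity_congr_ae ?_
  have hfin : ∀ᵐ y ∂(ω.map φ), (ω.map φ).rnDeriv ω y ≠ ∞ :=
    heq.1.ae_le (Measure.rnDeriv_ne_top _ _)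
  have hφ := ae_of_ae_map φ.measurable.aemeasurable ((Measure.rnDeriv_pos heq.1).and hfin)
  filter_upwards [hσ, hφ] with x hx ⟨h0, htop⟩
  rw [hx, Real.exp_neg, Real.exp_log (ENNReal.toReal_pos h0.ne' htop),
    ENNReal.ofReal_inv_of_pos (ENNReal.toReal_pos h0.ne' htop), ENNReal.ofReal_toReal htop]

theorem map_iterate_symm_eq_withDensity {σ : M → ℝ} (hσ : Measurable σ)
    (hexp : ω.map φ.symm = ω.withDensity fun x => ENNReal.ofReal (Real.exp (-σ x))) (m : ℕ) :
    ω.map φ.symm^[m] = ω.withDensity fun x => ENNReal.ofReal (Real.exp (-birkhoff φ σ m x)) := by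
  induction m with
  | zero => simp [birkhoff]
  | succ m ih =>
    have hS : Measurable (birkhoff φ σ m) := measurable_birkhoff φ.measurable hσ m
    rw [Function.iterate_succ', ← Measure.map_map φ.symm.measurable
      (φ.symm.measurable.iterate m), ih]
    have := φ.symm.toMeasurableEquiv.map_withDensity ω
      fun x => ENNReal.ofReal (Real.exp (-birkhoff φ σ m x))
    simp only [Homeomorph.toMeasurableEquiv_coe, Homeomorph.toMeasurableEquiv_symm_coe,
      Homeomorph.symm_symm] at this
    rw [this, hexp, ← withDensity_mul _ (by fun_prop) (by fun_prop)]
    congr with x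
    simp [birkhoff_succ', Real.exp_add, ENNReal.ofReal_mul (Real.exp_pos _).le, mul_comm]

end ChangeOfVariables

section TimeReversal

variable {M : Type*} [MetricSpace M] [MeasurableSpace M] [BorelSpace M] (φ : M ≃ₜ M)
  {ϑ : M → M} {ω : Measure M} [IsFiniteMeasure ω] {σ : M → ℝ}

theorem measure_bowenBall_reversal_le (hϑ : Measurable ϑ)
    (hϑφ : ∀ x, ϑ (φ x) = φ.symm (ϑ x)) (hωϑ : ω.map ϑ = ω) (hσ : Measurable σ)
    (hexp : ω.map φ.symm = ω.withDensity fun x => ENNReal.ofReal (Real.exp (-σ x)))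
    {c : ℝ} (hc : 0 < c) (hdist : ∀ a b, dist a b ≤ c * dist (ϑ a) (ϑ b)) {m : ℕ} {y : M}
    {ε a : ℝ} (hosc : ∀ w ∈ bowenBall φ (m + 1) y (c * ε),
      |birkhoff φ σ m w - birkhoff φ σ m y| ≤ a) :
    (ω (bowenBall φ (m + 1) (ϑ (φ^[m] y)) ε)).toReal
      ≤ Real.exp (-birkhoff φ σ m y + a) * (ω (bowenBall φ (m + 1) y (c * ε))).toReal := by
  have hB := (isOpen_bowenBall φ.continuous (m + 1) y (c * ε)).measurableSet
  have hBx := (isOpen_bowenBall φ.continuous (m + 1) (ϑ (φ^[m] y)) ε).measurableSet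
  have := calc
    ω (bowenBall φ (m + 1) (ϑ (φ^[m] y)) ε)
      = ω (ϑ ⁻¹' bowenBall φ (m + 1) (ϑ (φ^[m] y)) ε) := by
        rw [← Measure.map_apply hϑ hBx, hωϑ]
    _ ≤ ω (φ.symm^[m] ⁻¹' bowenBall φ (m + 1) y (c * ε)) :=
        measure_mono (preimage_bowenBall_reversal_subset_preimage_bowenBall φ hϑφ hc hdist le_rfl)
    _ = ω.withDensity (fun x => ENNReal.ofReal (Real.exp (-birkhoff φ σ m x)))
          (bowenBall φ (m + 1) y (c * ε)) := by
        rw [← map_iterate_symm_eq_withDensity φ ω hσ hexp,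
          Measure.map_apply (φ.symm.measurable.iterate m) hB]
    _ ≤ _ := withDensity_exp_neg_apply_le ω hB hosc
  simpa [ENNReal.toReal_mul, Real.exp_nonneg] using
    ENNReal.toReal_mono (by finiteness) this

theorem le_measure_bowenBall_reversal (hϑ : Measurable ϑ)
    (hϑφ : ∀ x, ϑ (φ x) = φ.symm (ϑ x)) (hωϑ : ω.map ϑ = ω) (hσ : Measurable σ)
    (hexp : ω.map φ.symm = ω.withDensity fun x => ENNReal.ofReal (Real.exp (-σ x)))
    {c : ℝ} (hc : 0 < c) (hdist : ∀ a b, dist (ϑ a) (ϑ b) ≤ c * dist a b) {m : ℕ} {y : M}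
    {ε δ a : ℝ} (hδ : c * δ ≤ ε) (hosc : ∀ w ∈ bowenBall φ (m + 1) y δ,
      |birkhoff φ σ m w - birkhoff φ σ m y| ≤ a) :
    Real.exp (-birkhoff φ σ m y - a) * (ω (bowenBall φ (m + 1) y δ)).toReal
      ≤ (ω (bowenBall φ (m + 1) (ϑ (φ^[m] y)) ε)).toReal := by
  have hB := (isOpen_bowenBall φ.continuous (m + 1) y δ).measurableSet
  have hBx := (isOpen_bowenBall φ.continuous (m + 1) (ϑ (φ^[m] y)) ε).measurableSet
  have := calc
    ENNReal.ofReal (Real.exp (-birkhoff φ σ m y - a)) * ω (bowenBall φ (m + 1) y δ)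
      ≤ ω.withDensity (fun x => ENNReal.ofReal (Real.exp (-birkhoff φ σ m x)))
          (bowenBall φ (m + 1) y δ) := le_withDensity_exp_neg_apply ω hB hosc
    _ = ω (φ.symm^[m] ⁻¹' bowenBall φ (m + 1) y δ) := by
        rw [← map_iterate_symm_eq_withDensity φ ω hσ hexp,
          Measure.map_apply (φ.symm.measurable.iterate m) hB]
    _ ≤ ω (ϑ ⁻¹' bowenBall φ (m + 1) (ϑ (φ^[m] y)) ε) :=
        measure_mono (preimage_bowenBall_subset_preimage_bowenBall_reversal φ hϑφ hc hdist hδ)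
    _ = ω (bowenBall φ (m + 1) (ϑ (φ^[m] y)) ε) := by
        rw [← Measure.map_apply hϑ hBx, hωϑ]
  simpa [ENNReal.toReal_mul, Real.exp_nonneg] using
    ENNReal.toReal_mono (by finiteness) this

end TimeReversal

section GibbsBounds

variable {M : Type*} [MetricSpace M] [MeasurableSpace M]

-- The positivity conjunct is not implied by the logarithmic bound, as `Real.log 0 = 0`.
def BowenBallLogBound (φ : M → M) (V : M → ℝ) (ν : Measure M) (ε : ℝ) (D : ℕ → ℝ) : Prop :=
  ∀ n ≥ 1, ∀ x, 0 < (ν (bowenBall φ n x ε)).toReal ∧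
    |Real.log (ν (bowenBall φ n x ε)).toReal - birkhoff φ V n x| ≤ D n

theorem memSV.eventually_bowenBallLogBound {φ : M → M} {V : M → ℝ} {ν : Measure M}
    (h : memSV φ V ν) : ∀ᶠ ε in 𝓝[>] (0 : ℝ), ∃ D : ℕ → ℝ,
      Tendsto (fun n => D n / n) atTop (𝓝 0) ∧ BowenBallLogBound φ V ν ε D := by
  obtain ⟨ε₀, hε₀, h⟩ := h
  filter_upwards [Ioo_mem_nhdsGT hε₀] with ε ⟨hε, hεε₀⟩
  obtain ⟨C, hCpos, hC, hbound⟩ := h ε hε hεε₀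
  refine ⟨fun n => Real.log (C n), hC, fun n hn x => ?_⟩
  obtain ⟨hlo, hhi⟩ := hbound n hn x
  have hprod := (inv_pos.2 (hCpos n)).trans_le hlo
  have hpos := pos_of_mul_pos_left hprod (Real.exp_pos _).le
  have hlog : Real.log ((ν (bowenBall φ n x ε)).toReal * Real.exp (-birkhoff φ V n x))
      = Real.log (ν (bowenBall φ n x ε)).toReal - birkhoff φ V n x := by
    rw [Real.log_mul hpos.ne' (Real.exp_pos _).ne', Real.log_exp, sub_eq_add_neg]
  refine ⟨hpos, abs_le.2 ⟨?_, ?_⟩⟩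
  · have := Real.log_le_log (inv_pos.2 (hCpos n)) hlo
    rw [Real.log_inv, hlog] at this
    linarith
  · have := Real.log_le_log hprod hhi
    rw [hlog] at this
    linarith

end GibbsBounds

theorem abs_sub_add_le_of_exp_sandwich {A B₂ B₃ s a u v d₁ d₂ d₃ : ℝ} (hB₃ : 0 < B₃)
    (hlo : Real.exp (-s - a) * B₃ ≤ A) (hhi : A ≤ Real.exp (-s + a) * B₂)
    (h₁ : |Real.log A - u| ≤ d₁) (h₂ : |Real.log B₂ - v| ≤ d₂) (h₃ : |Real.log B₃ - v| ≤ d₃) :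
    |u - v + s| ≤ a + d₁ + d₂ + d₃ := by
  have hA : 0 < A := (mul_pos (Real.exp_pos _) hB₃).trans_le hlo
  have hB₂ : 0 < B₂ := pos_of_mul_pos_right (hA.trans_le hhi) (Real.exp_pos _).le
  have hlo' := Real.log_le_log (mul_pos (Real.exp_pos _) hB₃) hlo
  have hhi' := Real.log_le_log hA hhi
  rw [Real.log_mul (Real.exp_pos _).ne' hB₃.ne', Real.log_exp] at hlo'
  rw [Real.log_mul (Real.exp_pos _).ne' hB₂.ne', Real.log_exp] at hhi'
  rw [abs_le] at *
  constructor <;> linarith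

theorem tendsto_inv_mul_iSup_abs_of_forall_le {ι : Type*} (F : ℕ → ι → ℝ)
    (h : ∀ η > 0, ∃ D : ℕ → ℝ, Tendsto (fun n => D n / n) atTop (𝓝 0) ∧
      ∀ n ≥ 1, ∀ i, |F n i| ≤ D n + n * η) :
    Tendsto (fun n : ℕ => (n : ℝ)⁻¹ * ⨆ i, |F n i|) atTop (𝓝 0) := by
  refine tendsto_order.2 ⟨fun a ha => Eventually.of_forall fun n =>
    ha.trans_le (mul_nonneg (by positivity) (Real.iSup_nonneg fun i => abs_nonneg _)),
    fun a ha => ?_⟩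
  obtain ⟨D, hD, hF⟩ := h (a / 2) (half_pos ha)
  filter_upwards [(tendsto_order.1 hD).2 (a / 2) (half_pos ha), eventually_ge_atTop 1]
    with n hDn hn
  have hn' : (0 : ℝ) < n := by exact_mod_cast hn
  calc (n : ℝ)⁻¹ * ⨆ i, |F n i| ≤ (n : ℝ)⁻¹ * max (D n + n * (a / 2)) 0 :=
        mul_le_mul_of_nonneg_left (Real.iSup_le (fun i => (hF n hn i).trans (le_max_left _ _))
          (le_max_right _ _)) (by positivity)
    _ = max (D n / n + a / 2) 0 := by
        rw [mul_max_of_nonneg _ _ (by positivity), mul_zero]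
        congr 1
        field_simp
    _ < a := max_lt (by linarith) ha

theorem abs_birkhoff_sub_birkhoff_reversal_le {M : Type*} [MetricSpace M] [MeasurableSpace M]
    [BorelSpace M] (φ : M ≃ₜ M) {ϑ : M → M} (hϑ : Measurable ϑ)
    (hϑφ : ∀ x, ϑ (φ x) = φ.symm (ϑ x)) {Cd : ℝ} (hCd : 0 < Cd)
    (hmetric : ∀ x y : M,
      Cd⁻¹ * dist x y ≤ dist (ϑ x) (ϑ y) ∧ dist (ϑ x) (ϑ y) ≤ Cd * dist x y)
    {ω : Measure M} [IsFiniteMeasure ω] (hωϑ : ω.map ϑ = ω) {σ : M → ℝ} (hσ : Measurable σ)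
    (hexp : ω.map φ.symm = ω.withDensity fun x => ENNReal.ofReal (Real.exp (-σ x)))
    {V : M → ℝ} {ε η K r : ℝ} {D₁ D₂ D₃ : ℕ → ℝ} (hη : 0 ≤ η) (hK : ∀ x, |σ x| ≤ K)
    (hσr : ∀ a b, dist a b < r → dist (σ a) (σ b) ≤ η) (hr₂ : Cd * ε < r) (hr₃ : Cd⁻¹ * ε < r)
    (h₁ : BowenBallLogBound φ V ω ε D₁) (h₂ : BowenBallLogBound φ V ω (Cd * ε) D₂)
    (h₃ : BowenBallLogBound φ V ω (Cd⁻¹ * ε) D₃) {n : ℕ} (hn : 1 ≤ n) (y : M) :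
    |birkhoff φ σ n y - birkhoff φ (fun z => V z - V (ϑ z)) n y|
      ≤ K + D₁ n + D₂ n + D₃ n + n * η := by
  obtain ⟨m, rfl⟩ : ∃ m, n = m + 1 := ⟨n - 1, by omega⟩
  have hosc : ∀ δ < r, ∀ w ∈ bowenBall φ (m + 1) y δ,
      |birkhoff φ σ m w - birkhoff φ σ m y| ≤ (m + 1 : ℕ) * η := fun δ hδ w hw =>
    (abs_birkhoff_sub_le_of_mem_bowenBall (fun a b hab => hσr a b (hab.trans hδ))
      (bowenBall_anti m.le_succ y δ hw)).trans (by gcongr; simp)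
  have hdist : ∀ a b, dist a b ≤ Cd * dist (ϑ a) (ϑ b) := fun a b =>
    (inv_mul_le_iff₀ hCd).1 (hmetric a b).1
  have hhi := measure_bowenBall_reversal_le φ hϑ hϑφ hωϑ hσ hexp hCd hdist (hosc _ hr₂)
  have hlo := le_measure_bowenBall_reversal φ hϑ hϑφ hωϑ hσ hexp hCd (fun a b => (hmetric a b).2)
    (mul_inv_cancel_left₀ hCd.ne' ε).le (hosc _ hr₃)
  obtain ⟨hpos₃, hlog₃⟩ := h₃ (m + 1) hn y
  have hsandwich := abs_sub_add_le_of_exp_sandwich hpos₃ hlo hhi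
    (h₁ (m + 1) hn _).2 (h₂ (m + 1) hn y).2 hlog₃
  rw [birkhoff_reversal_iterate φ hϑφ] at hsandwich
  rw [birkhoff_sub, birkhoff_succ]
  have := abs_le.1 hsandwich
  have := abs_le.1 (hK (φ^[m] y))
  exact abs_le.2 ⟨by linarith, by linarith⟩

theorem entropy_production_physical_equivalence_general
    {M : Type*} [MetricSpace M] [CompactSpace M] [MeasurableSpace M] [BorelSpace M]
    (φ : M ≃ₜ M)
    (ϑ : M → M) (hϑc : Continuous ϑ)
    (hϑφ : ∀ x, ϑ (φ x) = φ.symm (ϑ x))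
    (Cd : ℝ) (hCd : 0 < Cd)
    (hmetric : ∀ x y : M,
      Cd⁻¹ * dist x y ≤ dist (ϑ x) (ϑ y) ∧ dist (ϑ x) (ϑ y) ≤ Cd * dist x y)
    (ω : Measure M) [IsProbabilityMeasure ω]
    (hωϑ : ω.map ϑ = ω)
    (heq : ω.map (⇑φ) ≪ ω ∧ ω ≪ ω.map (⇑φ))
    (σ : M → ℝ) (hσc : Continuous σ)
    (hσ : σ =ᵐ[ω] fun x => Real.log (((ω.map (⇑φ)).rnDeriv ω (φ x)).toReal))
    (V : M → ℝ) (hωV : memSV (⇑φ) V ω) :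
    Tendsto
      (fun n : ℕ => (n : ℝ)⁻¹ *
        ⨆ x : M, |birkhoff (⇑φ) σ n x - birkhoff (⇑φ) (fun y => V y - V (ϑ y)) n x|)
      atTop (nhds 0) := by
  have hexp := map_symm_eq_withDensity_exp_neg φ ω heq hσ
  obtain ⟨K, hK⟩ := isCompact_univ.exists_bound_of_continuousOn hσc.continuousOn
  refine tendsto_inv_mul_iSup_abs_of_forall_le _ fun η hη => ?_
  obtain ⟨r, hr, hσr⟩ :=
    Metric.uniformContinuous_iff.1 (CompactSpace.uniformContinuous_of_continuous hσc) η hη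
  have hSV := hωV.eventually_bowenBallLogBound
  have hlt : ∀ᶠ ε in 𝓝[>] (0 : ℝ), ε < r := nhdsWithin_le_nhds (eventually_lt_nhds hr)
  obtain ⟨ε, ⟨D₁, hD₁, h₁⟩, ⟨D₂, hD₂, h₂⟩, ⟨D₃, hD₃, h₃⟩, hr₂, hr₃⟩ :=
    (hSV.and <| (eventually_nhdsGT_zero_mul_left hCd hSV).and <|
      (eventually_nhdsGT_zero_mul_left (inv_pos.2 hCd) hSV).and <|
      (eventually_nhdsGT_zero_mul_left hCd hlt).and
      (eventually_nhdsGT_zero_mul_left (inv_pos.2 hCd) hlt)).exists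
  refine ⟨fun n => K + D₁ n + D₂ n + D₃ n, ?_, fun n hn y => ?_⟩
  · simpa [add_div] using
      (((tendsto_const_div_atTop_nhds_zero_nat K).add hD₁).add hD₂).add hD₃
  · exact abs_birkhoff_sub_birkhoff_reversal_le φ hϑc.measurable hϑφ hCd hmetric hωϑ
      hσc.measurable hexp hη.le (fun x => by simpa using hK x trivial) (fun a b h => (hσr h).le)
      hr₂ hr₃ h₁ h₂ h₃ hn y

/-- If `ϑ` is a (bi-Lipschitz-compatible) continuous time reversal, `ω` a TRI reference
measure with `ω∘φ^{-1}` equivalent to `ω`, `σ` a continuous version of the entropy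
production observable, and `ω ∈ S_V`, then `σ` is physically equivalent to
`σ̃_V := V - V∘ϑ`, i.e. `(1/n) sup_x |S_n σ(x) - S_n σ̃_V(x)| → 0`. -/
theorem entropy_production_physical_equivalence
    {M : Type*} [MetricSpace M] [CompactSpace M] [MeasurableSpace M] [BorelSpace M]
    (φ : M ≃ₜ M)
    (ϑ : M → M) (hϑc : Continuous ϑ) (hϑinv : ∀ x, ϑ (ϑ x) = x)
    (hϑφ : ∀ x, ϑ (φ x) = φ.symm (ϑ x))
    (Cd : ℝ) (hCd : 0 < Cd)
    (hmetric : ∀ x y : M,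
      Cd⁻¹ * dist x y ≤ dist (ϑ x) (ϑ y) ∧ dist (ϑ x) (ϑ y) ≤ Cd * dist x y)
    (ω : Measure M) [IsProbabilityMeasure ω]
    (hωϑ : ω.map ϑ = ω)
    (heq : ω.map (⇑φ) ≪ ω ∧ ω ≪ ω.map (⇑φ))
    (σ : M → ℝ) (hσc : Continuous σ)
    (hσ : σ =ᵐ[ω] fun x => Real.log (((ω.map (⇑φ)).rnDeriv ω (φ x)).toReal))
    (V : M → ℝ) (hVc : Continuous V) (hωV : memSV (⇑φ) V ω) :
    Tendsto
      (fun n : ℕ => (n : ℝ)⁻¹ *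
        ⨆ x : M, |birkhoff (⇑φ) σ n x - birkhoff (⇑φ) (fun y => V y - V (ϑ y)) n x|)
      atTop (nhds 0) :=
  entropy_production_physical_equivalence_general φ ϑ hϑc hϑφ Cd hCd hmetric ω hωϑ heq σ hσc hσ V
    hωV
end
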